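/- Let L ∈ ℝ^{q×n} with rows L₁,…,L_q and let b ∈ ℝ^q with bᵢ > 0 for all i. Suppose the polyhedron P = {u ∈ ℝ^n : Lᵢu ≤ bᵢ for all i} is bounded. Then there exists m > 0 such that for every u with Lᵢu < bᵢ for all i and every x ∈ ℝ^n, ∑_{i=1}^q (Lᵢx)²/(bᵢ − Lᵢu)² ≥ m‖x‖². (Equivalently, the gradient-recentered log-barrier over P is strongly convex on the interior of P.) -/

import Mathlib

/-!
Boundedness of `P = {u | Lu ≤ b}` forces `ker L = 0`: `P` contains `0` (as `b > 0`) and is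
invariant under translation by the kernel. Being injective on a finite-dimensional space, `L`
satisfies `c‖x‖ ≤ ‖Lx‖`. On the other hand `u ↦ Lu` is bounded on the bounded set `P`, so the
slacks `bᵢ - Lᵢu` are at most some `C`, and each term `(Lᵢx)²/(bᵢ - Lᵢu)²` is at least
`(Lᵢx)²/C²`. Summing gives the claim with `m = (c/C)²`.
-/

open Matrix Bornology

theorem Bornology.IsBounded.eq_zero_of_forall_add_smul_mem {E : Type*} [NormedAddCommGroup E]
    [NormedSpace ℝ E] {s : Set E} (hs : IsBounded s) {u x : E} (h : ∀ t : ℝ, u + t • x ∈ s) :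
    x = 0 := by
  obtain ⟨R, hR⟩ := isBounded_iff_forall_norm_le.1 hs
  by_contra hx
  have hx : 0 < ‖x‖ := norm_pos_iff.2 hx
  have hR0 : 0 ≤ R := (norm_nonneg _).trans (hR _ (h 0))
  set t := (R + ‖u‖ + 1) / ‖x‖
  have ht : ‖t • x‖ = R + ‖u‖ + 1 := by
    rw [norm_smul, Real.norm_of_nonneg (by positivity), div_mul_cancel₀ _ hx.ne']
  have : ‖t • x‖ ≤ R + ‖u‖ :=
    calc ‖t • x‖ = ‖(u + t • x) - u‖ := by rw [add_sub_cancel_left]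
      _ ≤ ‖u + t • x‖ + ‖u‖ := norm_sub_le _ _
      _ ≤ R + ‖u‖ := by gcongr; exact hR _ (h t)
  linarith

theorem LinearMap.ker_eq_bot_of_isBounded_preimage {E F : Type*} [NormedAddCommGroup E]
    [NormedSpace ℝ E] [AddCommGroup F] [Module ℝ F] (f : E →ₗ[ℝ] F) {S : Set F}
    (hS : IsBounded (f ⁻¹' S)) (hne : (f ⁻¹' S).Nonempty) : LinearMap.ker f = ⊥ := by
  obtain ⟨u, hu⟩ := hne
  refine (LinearMap.ker_eq_bot').2 fun x hx => hS.eq_zero_of_forall_add_smul_mem (u := u) ?_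
  simpa [hx] using hu

theorem Matrix.exists_forall_abs_mulVec_le {m n : Type*} [Fintype m] [Fintype n] [DecidableEq n]
    (L : Matrix m n ℝ) {s : Set (EuclideanSpace ℝ n)} (hs : IsBounded s) :
    ∃ R, ∀ u ∈ s, ∀ i, |(L *ᵥ u) i| ≤ R := by
  let T := (toLpLin 2 2 L).toContinuousLinearMap
  obtain ⟨R, hR⟩ := isBounded_iff_forall_norm_le.1 (T.lipschitz.isBounded_image hs)
  exact ⟨R, fun u hu i => (PiLp.norm_apply_le (T u) i).trans (hR _ ⟨u, hu, rfl⟩)⟩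

theorem Matrix.exists_pos_forall_sub_mulVec_le {m n : Type*} [Fintype m] [Fintype n]
    [DecidableEq n] (L : Matrix m n ℝ) (b : m → ℝ) {s : Set (EuclideanSpace ℝ n)}
    (hs : IsBounded s) :
    ∃ C > 0, ∀ u ∈ s, ∀ i, b i - (L *ᵥ u) i ≤ C := by
  obtain ⟨R, hR⟩ := L.exists_forall_abs_mulVec_le hs
  obtain ⟨B, hB⟩ := (Set.finite_range b).bddAbove
  refine ⟨max 1 (B + R), one_pos.trans_le (le_max_left _ _), fun u hu i => ?_⟩
  linarith [hB ⟨i, rfl⟩, neg_abs_le ((L *ᵥ u) i), hR u hu i, le_max_right 1 (B + R)]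

theorem barrier_strongly_convex_of_bounded_polyhedron {n q : ℕ}
    (L : Matrix (Fin q) (Fin n) ℝ) (b : Fin q → ℝ) (hb : ∀ i, 0 < b i)
    (hbdd : Bornology.IsBounded
      {u : EuclideanSpace ℝ (Fin n) | ∀ i, L.mulVec u i ≤ b i}) :
    ∃ m : ℝ, 0 < m ∧
      ∀ u : EuclideanSpace ℝ (Fin n), (∀ i, L.mulVec u i < b i) →
        ∀ x : EuclideanSpace ℝ (Fin n),
          m * ‖x‖ ^ 2 ≤ ∑ i, (L.mulVec x i) ^ 2 / (b i - L.mulVec u i) ^ 2 := by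
  set T := toLpLin 2 2 L
  have hP : {u : EuclideanSpace ℝ (Fin n) | ∀ i, L.mulVec u i ≤ b i} =
      T ⁻¹' {y | ∀ i, y i ≤ b i} := rfl
  have h0 : (0 : EuclideanSpace ℝ (Fin n)) ∈ T ⁻¹' {y | ∀ i, y i ≤ b i} := fun i => by
    simpa using (hb i).le
  obtain ⟨K, -, hK⟩ := T.exists_antilipschitzWith
    (T.ker_eq_bot_of_isBounded_preimage (hP ▸ hbdd) ⟨0, h0⟩)
  obtain ⟨c, hc, hcT⟩ := antilipschitzWith_iff_exists_mul_le_norm.1 ⟨K, hK⟩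
  obtain ⟨C, hC, hslack⟩ := L.exists_pos_forall_sub_mulVec_le b hbdd
  refine ⟨(c / C) ^ 2, by positivity, fun u hu x => ?_⟩
  calc (c / C) ^ 2 * ‖x‖ ^ 2 = (c * ‖x‖) ^ 2 / C ^ 2 := by ring
    _ ≤ ‖T x‖ ^ 2 / C ^ 2 := by gcongr; exact hcT x
    _ = ∑ i, (L.mulVec x i) ^ 2 / C ^ 2 := by
      rw [EuclideanSpace.real_norm_sq_eq, Finset.sum_div]; rfl
    _ ≤ ∑ i, (L.mulVec x i) ^ 2 / (b i - L.mulVec u i) ^ 2 := by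
      have hpos i : 0 < b i - L.mulVec u i := sub_pos.2 (hu i)
      gcongr with i
      · exact pow_pos (hpos i) 2
      · exact (hpos i).le
      · exact hslack u (fun j => (hu j).le) i
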